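/- Fix a ∈ (0,1), b ∈ (1/2,∞). Then the posterior mean of 1-κ, namely E(1-κ|x) = (∫₀¹ κ^{b-1/2}(1-κ)^a e^{-κx²/2} dκ)/(∫₀¹ κ^{b-1/2}(1-κ)^{a-1} e^{-κx²/2} dκ), converges to 1 as x → ∞. -/

import Mathlib

/-!
Tilting the weight `w(κ) = κ^p (1-κ)^(a-1)` on `[0,1]` by `exp(-κt)` pushes its mass
towards `κ = 0` as `t → ∞`: beyond any `δ` the tilted mass is at most `e^{-δt} ∫ w`, while
the total tilted mass is at least `e^{-δt/2} ∫₀^{δ/2} w`. Hence the tilted mean of `κ` is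
eventually below `δ + O(e^{-δt/2})`, so the mean of `1 - κ` tends to `1`; here `t = x²/2`
and `p = b - 1/2`.
-/

open Real Filter MeasureTheory Set Topology intervalIntegral

noncomputable section

def unitIntervalLaplace (w : ℝ → ℝ) (t : ℝ) : ℝ :=
  ∫ κ in (0:ℝ)..1, w κ * exp (-κ * t)

section Tilting

variable {w : ℝ → ℝ}

lemma IntervalIntegrable.mul_exp_neg_mul {a b : ℝ} (hw : IntervalIntegrable w volume a b)
    (t : ℝ) : IntervalIntegrable (fun κ => w κ * exp (-κ * t)) volume a b :=
  hw.mul_continuousOn (by fun_prop)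

lemma unitIntervalLaplace_nonneg (hw_nonneg : ∀ κ ∈ Icc (0:ℝ) 1, 0 ≤ w κ) (t : ℝ) :
    0 ≤ unitIntervalLaplace w t :=
  intervalIntegral.integral_nonneg zero_le_one fun κ hκ =>
    mul_nonneg (hw_nonneg κ hκ) (exp_pos _).le

lemma mul_mul_exp_neg_le {κ δ t v : ℝ} (hκ : κ ∈ Icc (0:ℝ) 1) (hδ : 0 ≤ δ) (ht : 0 ≤ t)
    (hv : 0 ≤ v) : κ * v * exp (-κ * t) ≤ δ * (v * exp (-κ * t)) + exp (-δ * t) * v := by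
  have hexp := (exp_pos (-κ * t)).le
  rcases le_or_gt κ δ with hκδ | hδκ
  · have : κ * v * exp (-κ * t) ≤ δ * (v * exp (-κ * t)) := by
      rw [← mul_assoc]; gcongr
    linarith [mul_nonneg (exp_pos (-δ * t)).le hv]
  · have hdecay : exp (-κ * t) ≤ exp (-δ * t) := exp_le_exp.2 (by nlinarith)
    calc κ * v * exp (-κ * t) ≤ 1 * v * exp (-δ * t) := by gcongr; exact hκ.2
      _ ≤ δ * (v * exp (-κ * t)) + exp (-δ * t) * v := by
        nlinarith [mul_nonneg hδ (mul_nonneg hv hexp)]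

lemma unitIntervalLaplace_mul_id_le (hw : IntervalIntegrable w volume 0 1)
    (hw_nonneg : ∀ κ ∈ Icc (0:ℝ) 1, 0 ≤ w κ) {δ t : ℝ} (hδ : 0 ≤ δ) (ht : 0 ≤ t) :
    unitIntervalLaplace (fun κ => κ * w κ) t ≤
      δ * unitIntervalLaplace w t + exp (-δ * t) * ∫ κ in (0:ℝ)..1, w κ := by
  have hmul : IntervalIntegrable (fun κ => κ * w κ) volume 0 1 :=
    hw.continuousOn_mul continuousOn_id
  rw [unitIntervalLaplace, unitIntervalLaplace, ← intervalIntegral.integral_const_mul,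
    ← intervalIntegral.integral_const_mul, ← intervalIntegral.integral_add
      ((hw.mul_exp_neg_mul t).const_mul δ) (hw.const_mul _)]
  exact intervalIntegral.integral_mono_on zero_le_one (hmul.mul_exp_neg_mul t)
    (((hw.mul_exp_neg_mul t).const_mul δ).add (hw.const_mul _))
    fun κ hκ => mul_mul_exp_neg_le hκ hδ ht (hw_nonneg κ hκ)

lemma exp_mul_integral_le_unitIntervalLaplace (hw : IntervalIntegrable w volume 0 1)
    (hw_nonneg : ∀ κ ∈ Icc (0:ℝ) 1, 0 ≤ w κ) {η t : ℝ} (hη : η ∈ Icc (0:ℝ) 1) (ht : 0 ≤ t) :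
    exp (-η * t) * ∫ κ in (0:ℝ)..η, w κ ≤ unitIntervalLaplace w t := by
  have hsub : uIcc 0 η ⊆ uIcc (0:ℝ) 1 :=
    uIcc_subset_uIcc_left (by simpa [uIcc_of_le zero_le_one])
  rw [← intervalIntegral.integral_const_mul]
  calc ∫ κ in (0:ℝ)..η, exp (-η * t) * w κ
      ≤ ∫ κ in (0:ℝ)..η, w κ * exp (-κ * t) := by
        refine intervalIntegral.integral_mono_on hη.1 ((hw.mono_set hsub).const_mul _)
          ((hw.mul_exp_neg_mul t).mono_set hsub) fun κ hκ => ?_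
        rw [mul_comm]
        exact mul_le_mul_of_nonneg_left (exp_le_exp.2 (by nlinarith [hκ.2]))
          (hw_nonneg κ ⟨hκ.1, hκ.2.trans hη.2⟩)
    _ ≤ unitIntervalLaplace w t := by
        refine intervalIntegral.integral_mono_interval le_rfl hη.1 hη.2 ?_ (hw.mul_exp_neg_mul t)
        refine (ae_restrict_iff' measurableSet_Ioc).2 (ae_of_all _ fun κ hκ => ?_)
        exact mul_nonneg (hw_nonneg κ (Ioc_subset_Icc_self hκ)) (exp_pos _).le

theorem tendsto_unitIntervalLaplace_mul_id_div (hw : IntervalIntegrable w volume 0 1)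
    (hw_nonneg : ∀ κ ∈ Icc (0:ℝ) 1, 0 ≤ w κ)
    (hw_mass : ∀ η ∈ Ioo (0:ℝ) 1, 0 < ∫ κ in (0:ℝ)..η, w κ) :
    Tendsto (fun t => unitIntervalLaplace (fun κ => κ * w κ) t / unitIntervalLaplace w t)
      atTop (𝓝 0) := by
  have hmul_nonneg : ∀ κ ∈ Icc (0:ℝ) 1, 0 ≤ κ * w κ := fun κ hκ =>
    mul_nonneg hκ.1 (hw_nonneg κ hκ)
  refine tendsto_order.2 ⟨fun ε hε => Eventually.of_forall fun t => hε.trans_le <|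
    div_nonneg (unitIntervalLaplace_nonneg hmul_nonneg t) (unitIntervalLaplace_nonneg hw_nonneg t),
    fun ε hε => ?_⟩
  set δ := min (ε / 2) (1 / 2)
  have hδ : 0 < δ := by positivity
  have hδε : δ < ε := (min_le_left _ _).trans_lt (by linarith)
  have hη : δ / 2 ∈ Ioo (0:ℝ) 1 := ⟨by positivity, by linarith [min_le_right (ε / 2) (1 / 2)]⟩
  set c := ∫ κ in (0:ℝ)..δ / 2, w κ
  have hc : 0 < c := hw_mass _ hη
  set W := ∫ κ in (0:ℝ)..1, w κ
  have hW : 0 ≤ W := intervalIntegral.integral_nonneg zero_le_one hw_nonneg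
  have hdecay : Tendsto (fun t => W / c * exp (-(δ / 2) * t)) atTop (𝓝 0) := by
    simpa using (tendsto_exp_atBot.comp
      (tendsto_id.const_mul_atTop_of_neg (neg_lt_zero.2 (half_pos hδ)))).const_mul (W / c)
  filter_upwards [hdecay.eventually_lt_const (sub_pos.2 hδε), eventually_ge_atTop 0]
    with t hsmall ht
  set X := W / c * exp (-(δ / 2) * t)
  have hX : 0 ≤ X := by positivity
  have hlow := exp_mul_integral_le_unitIntervalLaplace hw hw_nonneg (Ioo_subset_Icc_self hη) ht
  have hpos : 0 < unitIntervalLaplace w t :=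
    (by positivity : 0 < exp (-(δ / 2) * t) * c).trans_le hlow
  have htail : exp (-δ * t) * W = X * (exp (-(δ / 2) * t) * c) := by
    rw [show -δ * t = -(δ / 2) * t + -(δ / 2) * t by ring, exp_add]
    simp only [X]
    field_simp
  rw [div_lt_iff₀ hpos]
  calc unitIntervalLaplace (fun κ => κ * w κ) t
      ≤ δ * unitIntervalLaplace w t + X * (exp (-(δ / 2) * t) * c) :=
        htail ▸ unitIntervalLaplace_mul_id_le hw hw_nonneg hδ.le ht
    _ ≤ δ * unitIntervalLaplace w t + X * unitIntervalLaplace w t := by gcongr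
    _ < ε * unitIntervalLaplace w t := by nlinarith

theorem tendsto_unitIntervalLaplace_one_sub_mul_div (hw : IntervalIntegrable w volume 0 1)
    (hw_nonneg : ∀ κ ∈ Icc (0:ℝ) 1, 0 ≤ w κ)
    (hw_mass : ∀ η ∈ Ioo (0:ℝ) 1, 0 < ∫ κ in (0:ℝ)..η, w κ) :
    Tendsto (fun t => unitIntervalLaplace (fun κ => (1 - κ) * w κ) t / unitIntervalLaplace w t)
      atTop (𝓝 1) := by
  have hmul : IntervalIntegrable (fun κ => κ * w κ) volume 0 1 :=
    hw.continuousOn_mul continuousOn_id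
  have hpos : ∀ t, 0 ≤ t → 0 < unitIntervalLaplace w t := fun t ht =>
    (mul_pos (exp_pos _) (hw_mass (1 / 2) ⟨by norm_num, by norm_num⟩)).trans_le <|
      exp_mul_integral_le_unitIntervalLaplace hw hw_nonneg ⟨by norm_num, by norm_num⟩ ht
  have hsplit : ∀ t, unitIntervalLaplace (fun κ => (1 - κ) * w κ) t =
      unitIntervalLaplace w t - unitIntervalLaplace (fun κ => κ * w κ) t := fun t => by
    rw [unitIntervalLaplace, unitIntervalLaplace, unitIntervalLaplace,
      ← intervalIntegral.integral_sub (hw.mul_exp_neg_mul t) (hmul.mul_exp_neg_mul t)]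
    congr 1 with κ
    ring
  have := (tendsto_unitIntervalLaplace_mul_id_div hw hw_nonneg hw_mass).const_sub 1
  rw [sub_zero] at this
  refine this.congr' ((eventually_ge_atTop 0).mono fun t ht => ?_)
  dsimp only
  rw [hsplit, sub_div, div_self (hpos t ht).ne']

end Tilting

section Beta

variable {p q : ℝ}

lemma intervalIntegrable_rpow_mul_one_sub_rpow (hp : 0 ≤ p) (hq : -1 < q) :
    IntervalIntegrable (fun κ : ℝ => κ ^ p * (1 - κ) ^ q) volume 0 1 := by
  have h : IntervalIntegrable (fun κ : ℝ => (1 - κ) ^ q) volume 0 1 := by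
    simpa using ((intervalIntegrable_rpow' (a := 0) (b := 1) hq).comp_sub_left 1).symm
  simpa only [mul_comm] using h.continuousOn_mul (continuous_rpow_const hp).continuousOn

lemma rpow_mul_one_sub_rpow_nonneg {κ : ℝ} (hκ : κ ∈ Icc (0:ℝ) 1) :
    0 ≤ κ ^ p * (1 - κ) ^ q :=
  mul_nonneg (rpow_nonneg hκ.1 p) (rpow_nonneg (sub_nonneg.2 hκ.2) q)

lemma integral_rpow_mul_one_sub_rpow_pos (hp : 0 ≤ p) (hq : -1 < q) {η : ℝ}
    (hη : η ∈ Ioo (0:ℝ) 1) : 0 < ∫ κ in (0:ℝ)..η, κ ^ p * (1 - κ) ^ q := by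
  have hsub : uIcc 0 η ⊆ uIcc (0:ℝ) 1 := uIcc_subset_uIcc_left (by
    simpa [uIcc_of_le zero_le_one] using Ioo_subset_Icc_self hη)
  refine intervalIntegral_pos_of_pos_on
    ((intervalIntegrable_rpow_mul_one_sub_rpow hp hq).mono_set hsub) (fun κ hκ => ?_) hη.1
  exact mul_pos (rpow_pos_of_pos hκ.1 p) (rpow_pos_of_pos (by linarith [hκ.2, hη.2]) q)

theorem tendsto_unitIntervalLaplace_beta_div (hp : 0 ≤ p) {a : ℝ} (ha : 0 < a) :
    Tendsto (fun t => unitIntervalLaplace (fun κ => κ ^ p * (1 - κ) ^ a) t /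
      unitIntervalLaplace (fun κ => κ ^ p * (1 - κ) ^ (a - 1)) t) atTop (𝓝 1) := by
  have hq : -1 < a - 1 := by linarith
  refine (tendsto_unitIntervalLaplace_one_sub_mul_div
    (intervalIntegrable_rpow_mul_one_sub_rpow hp hq) (fun κ => rpow_mul_one_sub_rpow_nonneg)
    (fun η => integral_rpow_mul_one_sub_rpow_pos hp hq)).congr fun t => ?_
  congr 1
  refine intervalIntegral.integral_congr fun κ hκ => ?_
  rw [uIcc_of_le zero_le_one] at hκ
  have hrpow : (1 - κ) ^ a = (1 - κ) ^ (a - 1) * (1 - κ) := by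
    rw [← rpow_add_one' (sub_nonneg.2 hκ.2) (by linarith), sub_add_cancel]
  simp only [hrpow]
  ring

end Beta

end

/-- For fixed a ∈ (0,1), b > 1/2, E(1-κ|x) → 1 as x → ∞. -/
theorem stmt_5 (a b : ℝ) (ha : a ∈ Set.Ioo (0:ℝ) 1) (hb : b ∈ Set.Ioi (1/2 : ℝ)) :
    Tendsto (fun x : ℝ =>
      (∫ κ in (0:ℝ)..1, κ ^ (b - 1/2) * (1 - κ) ^ a * Real.exp (-κ * x^2 / 2)) /
        (∫ κ in (0:ℝ)..1, κ ^ (b - 1/2) * (1 - κ) ^ (a - 1) * Real.exp (-κ * x^2 / 2)))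
      atTop (nhds 1) := by
  have hp : 0 ≤ b - 1 / 2 := sub_nonneg.2 (le_of_lt hb)
  have hsq : Tendsto (fun x : ℝ => x ^ 2 / 2) atTop atTop :=
    (tendsto_pow_atTop two_ne_zero).atTop_div_const two_pos
  simpa only [unitIntervalLaplace, Function.comp_def, mul_div_assoc] using
    (tendsto_unitIntervalLaplace_beta_div hp ha.1).comp hsq
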